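/- For every integer n, the point (3 - (3+3n+n²)², 3 - n(3+3n+n²)², 3 - n²(3+3n+n²)²) lies on the surface P(x,y,z) = 0, where P is Lawton's polynomial; hence the surface P = 0 has infinitely many integer points with x ≤ 3. -/
import Mathlib


def LawtonP (x y z : ℤ) : ℤ :=
  414 - 108 * x + x ^ 3 - 108 * y + 21 * x * y + y ^ 3
    - (51 - 9 * x - 9 * y + x * y) * z + z ^ 2

theorem stmt_9 :
    (∀ n : ℤ,
      LawtonP (3 - (3 + 3*n + n ^ 2) ^ 2)
              (3 - n * (3 + 3*n + n ^ 2) ^ 2)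
              (3 - n ^ 2 * (3 + 3*n + n ^ 2) ^ 2) = 0) ∧
    {p : ℤ × ℤ × ℤ | LawtonP p.1 p.2.1 p.2.2 = 0 ∧ p.1 ≤ 3}.Infinite := by
  have hmem : ∀ n : ℤ,
      LawtonP (3 - (3 + 3*n + n ^ 2) ^ 2)
              (3 - n * (3 + 3*n + n ^ 2) ^ 2)
              (3 - n ^ 2 * (3 + 3*n + n ^ 2) ^ 2) = 0 := by
    intro n; unfold LawtonP; ring
  refine ⟨hmem, ?_⟩
  apply Set.infinite_of_injective_forall_mem
    (f := fun n : ℤ => (3 - (3 + 3*n + n ^ 2) ^ 2,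
      3 - n * (3 + 3*n + n ^ 2) ^ 2, 3 - n ^ 2 * (3 + 3*n + n ^ 2) ^ 2))
  case hi =>
    intro a b hab
    simp only [Prod.mk.injEq] at hab
    obtain ⟨h1, h2, h3⟩ := hab
    have hs : (3 + 3*a + a ^ 2) ^ 2 = (3 + 3*b + b ^ 2) ^ 2 := by linarith
    have hsa : (0:ℤ) < 3 + 3*a + a ^ 2 := by nlinarith [sq_nonneg (2*a+3)]
    have h2' : a * (3 + 3*a + a ^ 2) ^ 2 = b * (3 + 3*a + a ^ 2) ^ 2 := by
      rw [hs] at h2 ⊢; linarith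
    exact mul_right_cancel₀ (pow_ne_zero 2 hsa.ne') h2'
  case hf =>
    intro n
    refine ⟨hmem n, ?_⟩
    have : (0:ℤ) ≤ (3 + 3*n + n ^ 2) ^ 2 := sq_nonneg _
    simp only []
    omega
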